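/- For each n ≥ 1, μ(n) = μ⁻(n) − 1. -/

import Mathlib

/-- The in-degree of vertex `z` in the digraph on `Fin n` with arc relation `A`
(`A x z` means `x` dominates `z`). -/
noncomputable def inDeg {n : ℕ} (A : Fin n → Fin n → Prop) (z : Fin n) : ℕ :=
  Nat.card {x : Fin n // A x z}

/-- The maximum in-degree `Δ⁻(D)` of the digraph on `Fin n` with arc relation `A`. -/
noncomputable def maxInDeg {n : ℕ} (A : Fin n → Fin n → Prop) : ℕ :=
  Finset.univ.sup (inDeg A)

/-- A digraph is mediated if for every pair of distinct vertices `x, y` there is a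
vertex `z` with `x, y ∈ N⁻[z]` (possibly `z = x` or `z = y`). -/
def Mediated {n : ℕ} (A : Fin n → Fin n → Prop) : Prop :=
  ∀ x y : Fin n, x ≠ y → ∃ z : Fin n, (x = z ∨ A x z) ∧ (y = z ∨ A y z)

/-- The `n`th mediation number `μ(n)`: the minimum of `Δ⁻(D)` over all mediated
digraphs (irreflexive arc relations) on `n` vertices. -/
noncomputable def mu (n : ℕ) : ℕ :=
  sInf { d : ℕ | ∃ A : Fin n → Fin n → Prop, Irreflexive A ∧ Mediated A ∧ maxInDeg A = d }

/-- `f(n) = ⌈(√(4n−3) − 1)/2⌉`. -/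
noncomputable def f (n : ℕ) : ℕ := ⌈(Real.sqrt (4 * (n : ℝ) - 3) - 1) / 2⌉₊
/-- A family of `n` blocks on the point set `Fin n` is 2-covering if every pair of
distinct points is contained in some block. -/
def TwoCovering {n : ℕ} (F : Fin n → Finset (Fin n)) : Prop :=
  ∀ x y : Fin n, x ≠ y → ∃ i : Fin n, x ∈ F i ∧ y ∈ F i

/-- A family has a system of distinct representatives if one can pick pairwise
distinct points, one from each block. -/
def HasSDR {n : ℕ} (F : Fin n → Finset (Fin n)) : Prop :=
  ∃ r : Fin n → Fin n, Function.Injective r ∧ ∀ i : Fin n, r i ∈ F i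

/-- A family of `n` blocks on `Fin n` (hence symmetric) is mediated if it is
2-covering and has an SDR. -/
def MediatedFamily {n : ℕ} (F : Fin n → Finset (Fin n)) : Prop :=
  TwoCovering F ∧ HasSDR F

/-- The maximum cardinality of a block of the family. -/
def mcard {n : ℕ} (F : Fin n → Finset (Fin n)) : ℕ :=
  Finset.univ.sup fun i => (F i).card

/-- `μ⁻(n)`: the minimum of `mcard F` over all mediated families on `[n]`. -/
noncomputable def muMinus (n : ℕ) : ℕ :=
  sInf { m : ℕ | ∃ F : Fin n → Finset (Fin n), MediatedFamily F ∧ mcard F = m }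

/- A mediated digraph turns into a mediated family by taking the closed in-neighbourhoods
`N⁻[z]` as blocks, each represented by its own centre `z`; conversely, a mediated family with
an SDR `σ` (a bijection of `[n]`) turns into a mediated digraph by letting the representative
`σ i` be dominated by the other points of its block `Xᵢ`. Block sizes and in-degrees differ by
exactly one in both directions, so the two minima differ by one. -/

open Finset

lemma inDeg_eq_card {n : ℕ} (A : Fin n → Fin n → Prop) [DecidableRel A] (z : Fin n) :
    inDeg A z = #{x | A x z} := by
  rw [inDeg, Nat.card_eq_fintype_card, Fintype.card_subtype]

lemma Nat.sInf_eq_sInf_sub_one {S T : Set ℕ} (hS : S.Nonempty)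
    (hST : ∀ d ∈ S, ∃ m ∈ T, m ≤ d + 1) (hTS : ∀ m ∈ T, ∃ d ∈ S, d ≤ m - 1) :
    sInf S = sInf T - 1 := by
  obtain ⟨m, hmT, hm⟩ := hST _ (Nat.sInf_mem hS)
  obtain ⟨d, hdS, hd⟩ := hTS _ (Nat.sInf_mem ⟨m, hmT⟩)
  have := Nat.sInf_le hmT
  have := Nat.sInf_le hdS
  omega

section DigraphToFamily

variable {n : ℕ} (A : Fin n → Fin n → Prop) [DecidableRel A]

def closedInNbhd (z : Fin n) : Finset (Fin n) :=
  insert z (univ.filter (A · z))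

variable {A}

lemma card_closedInNbhd (hA : Irreflexive A) (z : Fin n) :
    #(closedInNbhd A z) = inDeg A z + 1 := by
  rw [closedInNbhd, card_insert_of_notMem (by simp [hA z]), inDeg_eq_card]

lemma mediatedFamily_closedInNbhd (hA : Mediated A) : MediatedFamily (closedInNbhd A) := by
  refine ⟨fun x y hxy => ?_, id, Function.injective_id, fun z => mem_insert_self _ _⟩
  obtain ⟨z, hx, hy⟩ := hA x y hxy
  exact ⟨z, by simpa [closedInNbhd, eq_comm] using hx, by simpa [closedInNbhd, eq_comm] using hy⟩

lemma mcard_closedInNbhd_le (hA : Irreflexive A) :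
    mcard (closedInNbhd A) ≤ maxInDeg A + 1 :=
  Finset.sup_le fun z _ => by
    rw [card_closedInNbhd hA]
    exact Nat.add_le_add_right (le_sup (mem_univ z)) 1

end DigraphToFamily

section FamilyToDigraph

variable {n : ℕ} {F : Fin n → Finset (Fin n)}

lemma HasSDR.exists_equiv (hF : HasSDR F) : ∃ σ : Fin n ≃ Fin n, ∀ i, σ i ∈ F i := by
  obtain ⟨r, hr, hrF⟩ := hF
  exact ⟨Equiv.ofBijective r (Finite.injective_iff_bijective.1 hr), hrF⟩

variable (F) (σ : Fin n ≃ Fin n)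

def sdrArc (x z : Fin n) : Prop :=
  x ≠ z ∧ x ∈ F (σ.symm z)

lemma irreflexive_sdrArc : Irreflexive (sdrArc F σ) :=
  fun _ h => h.1 rfl

variable {F σ}

lemma mediated_sdrArc (hF : TwoCovering F) : Mediated (sdrArc F σ) := by
  intro x y hxy
  obtain ⟨i, hx, hy⟩ := hF x y hxy
  refine ⟨σ i, ?_, ?_⟩ <;> simp only [sdrArc, Equiv.symm_apply_apply] <;> tauto

lemma inDeg_sdrArc (hσ : ∀ i, σ i ∈ F i) (z : Fin n) :
    inDeg (sdrArc F σ) z = #(F (σ.symm z)) - 1 := by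
  classical
  have hz : z ∈ F (σ.symm z) := by simpa using hσ (σ.symm z)
  rw [inDeg_eq_card, ← card_erase_of_mem hz]
  congr 1
  ext x
  rw [mem_filter, mem_erase]
  simp only [sdrArc, mem_univ, true_and]

lemma maxInDeg_sdrArc_le (hσ : ∀ i, σ i ∈ F i) : maxInDeg (sdrArc F σ) ≤ mcard F - 1 :=
  Finset.sup_le fun z _ => by
    rw [inDeg_sdrArc hσ]
    exact Nat.sub_le_sub_right (le_sup (f := fun i => #(F i)) (mem_univ _)) 1

end FamilyToDigraph

theorem mu_eq_muMinus_sub_one_general (n : ℕ) : mu n = muMinus n - 1 := by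
  classical
  refine Nat.sInf_eq_sInf_sub_one ?_ ?_ ?_
  · refine ⟨_, (· ≠ ·), fun _ h => h rfl, fun x y hxy => ⟨x, .inl rfl, .inr hxy.symm⟩, rfl⟩
  · rintro _ ⟨A, hirr, hmed, rfl⟩
    exact ⟨_, ⟨_, mediatedFamily_closedInNbhd hmed, rfl⟩, mcard_closedInNbhd_le hirr⟩
  · rintro _ ⟨F, ⟨hcov, hsdr⟩, rfl⟩
    obtain ⟨σ, hσ⟩ := hsdr.exists_equiv
    exact ⟨_, ⟨_, irreflexive_sdrArc F σ, mediated_sdrArc hcov, rfl⟩, maxInDeg_sdrArc_le hσ⟩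

/-- For each `n ≥ 1`, `μ(n) = μ⁻(n) − 1`. -/
theorem mu_eq_muMinus_sub_one (n : ℕ) (hn : 1 ≤ n) : mu n = muMinus n - 1 :=
  mu_eq_muMinus_sub_one_general n
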